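/- Assume sup_{v>0} F(v) > 0 and set α₀ := (2 sup_{v>0} F(v))^{1/2}. Suppose either (a) α < α₀, S := {v > 0 : α² = 2F(v)} is nonempty with B := min S, and ℓ := ∫₀^B dr/√(α² − 2F(r)) = ∞, or (b) α = α₀ and α₀² = 2F(v̄) for some v̄ > 0, with B the minimum of such v̄. Then the stationary problem (E): v'' + f(v) = 0, v(0) = 0, v'(0) = α, has a unique solution Ṽ_α; it is defined on all of [0,∞), satisfies Ṽ_α'(x) > 0 for all x ≥ 0, and Ṽ_α(x) → B as x → ∞. -/

import Mathlib

/-! Extend `f` to negative arguments by `f 0 = 0`, so that `F` becomes `C¹` on `ℝ` and the speed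
`g r = √(α² - 2 F r)` is positive exactly on `(-∞, B)`. The solution is found by quadrature: the
travel time `Φ v = ∫₀^v dr / g r` maps `(-∞, B)` increasingly onto `ℝ`, onto because `1 / g` is
not integrable up to `B` (an assumption in case (a); in case (b) `F` is maximal at `B`, so
`f B = 0` and `g r = O(B - r)`). Then `V = Φ⁻¹` solves `V' = g ∘ V`, hence `V'' = -f ∘ V`.
Conversely, by energy conservation any solution `W` coincides with `V` as long as `W' > 0`, and
`W'` cannot vanish at a first time `T`, since `W T = V T < B` forces `W' T ² = g (V T) ² > 0`. -/

open Set Filter Topology MeasureTheory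

noncomputable section

def Fint (f : ℝ → ℝ) (v : ℝ) : ℝ := ∫ s in (0:ℝ)..v, f s

open Function

section InverseOnIio

variable {φ : ℝ → ℝ} {B : ℝ}

theorem invFunOn_Iio_lt (hsurj : SurjOn φ (Iio B) univ) (x : ℝ) :
    invFunOn φ (Iio B) x < B :=
  hsurj.mapsTo_invFunOn (mem_univ x)

theorem apply_invFunOn_Iio (hsurj : SurjOn φ (Iio B) univ) (x : ℝ) :
    φ (invFunOn φ (Iio B) x) = x :=
  hsurj.rightInvOn_invFunOn (mem_univ x)

theorem invFunOn_Iio_apply (hmono : StrictMonoOn φ (Iio B)) {v : ℝ} (hv : v < B) :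
    invFunOn φ (Iio B) (φ v) = v :=
  hmono.injOn.leftInvOn_invFunOn hv

theorem strictMono_invFunOn_Iio (hmono : StrictMonoOn φ (Iio B))
    (hsurj : SurjOn φ (Iio B) univ) : StrictMono (invFunOn φ (Iio B)) := by
  intro x y hxy
  by_contra! hle
  have := hmono.monotoneOn (invFunOn_Iio_lt hsurj y) (invFunOn_Iio_lt hsurj x) hle
  rw [apply_invFunOn_Iio hsurj, apply_invFunOn_Iio hsurj] at this
  exact this.not_gt hxy

theorem range_invFunOn_Iio (hmono : StrictMonoOn φ (Iio B)) (hsurj : SurjOn φ (Iio B) univ) :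
    range (invFunOn φ (Iio B)) = Iio B :=
  (range_subset_iff.2 (invFunOn_Iio_lt hsurj)).antisymm
    fun _ hv => ⟨_, invFunOn_Iio_apply hmono hv⟩

theorem continuous_invFunOn_Iio (hmono : StrictMonoOn φ (Iio B))
    (hsurj : SurjOn φ (Iio B) univ) : Continuous (invFunOn φ (Iio B)) := by
  refine continuous_iff_continuousAt.2 fun x => continuousAt_of_monotoneOn_of_image_mem_nhds
    ((strictMono_invFunOn_Iio hmono hsurj).monotone.monotoneOn univ) univ_mem ?_
  rw [image_univ, range_invFunOn_Iio hmono hsurj]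
  exact Iio_mem_nhds (invFunOn_Iio_lt hsurj x)

theorem hasDerivAt_invFunOn_Iio (hmono : StrictMonoOn φ (Iio B))
    (hsurj : SurjOn φ (Iio B) univ) {x d : ℝ} (hd : HasDerivAt φ d (invFunOn φ (Iio B) x))
    (hd0 : d ≠ 0) : HasDerivAt (invFunOn φ (Iio B)) d⁻¹ x :=
  hd.of_local_left_inverse (continuous_invFunOn_Iio hmono hsurj).continuousAt hd0
    (Eventually.of_forall (apply_invFunOn_Iio hsurj))

theorem tendsto_invFunOn_Iio_atTop (hmono : StrictMonoOn φ (Iio B))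
    (hsurj : SurjOn φ (Iio B) univ) : Tendsto (invFunOn φ (Iio B)) atTop (𝓝 B) :=
  tendsto_atTop_isLUB (strictMono_invFunOn_Iio hmono hsurj).monotone
    (by rw [range_invFunOn_Iio hmono hsurj]; exact isLUB_Iio)

end InverseOnIio

def travelTime (g : ℝ → ℝ) (v : ℝ) : ℝ := ∫ r in (0:ℝ)..v, (g r)⁻¹

section TravelTime

variable {g : ℝ → ℝ} {B : ℝ}

theorem travelTime_zero : travelTime g 0 = 0 := intervalIntegral.integral_same

theorem hasDerivAt_travelTime (hg : Continuous g) (hpos : ∀ r < B, 0 < g r) (hB : 0 < B)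
    {v : ℝ} (hv : v < B) : HasDerivAt (travelTime g) (g v)⁻¹ v := by
  have hcont : ContinuousOn (fun r => (g r)⁻¹) (Iio B) :=
    hg.continuousOn.inv₀ fun r hr => (hpos r hr).ne'
  exact intervalIntegral.integral_hasDerivAt_right
    (hcont.mono fun r hr => hr.2.trans_lt (max_lt hB hv)).intervalIntegrable
    (hcont.stronglyMeasurableAtFilter isOpen_Iio v hv) (hcont.continuousAt (Iio_mem_nhds hv))

theorem strictMonoOn_travelTime (hg : Continuous g) (hpos : ∀ r < B, 0 < g r) (hB : 0 < B) :
    StrictMonoOn (travelTime g) (Iio B) := by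
  refine strictMonoOn_of_deriv_pos (convex_Iio B)
    (fun v hv => (hasDerivAt_travelTime hg hpos hB hv).continuousAt.continuousWithinAt)
    fun v hv => ?_
  rw [interior_Iio] at hv
  rw [(hasDerivAt_travelTime hg hpos hB hv).deriv]
  exact inv_pos.2 (hpos v hv)

theorem travelTime_le_div_of_nonpos (hg : Continuous g) {M : ℝ} (hpos : ∀ r ≤ 0, 0 < g r)
    (hM : ∀ r ≤ 0, g r ≤ M) {v : ℝ} (hv : v ≤ 0) : travelTime g v ≤ v / M := by
  have hint : ∫ _ in v..0, M⁻¹ ≤ ∫ r in v..0, (g r)⁻¹ :=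
    intervalIntegral.integral_mono_on hv intervalIntegrable_const
      ((hg.continuousOn.inv₀ fun r hr => (hpos r hr.2).ne').intervalIntegrable_of_Icc hv)
      fun r hr => inv_anti₀ (hpos r hr.2) (hM r hr.2)
  calc travelTime g v = -∫ r in v..0, (g r)⁻¹ := intervalIntegral.integral_symm _ _
    _ ≤ -∫ _ in v..0, M⁻¹ := neg_le_neg hint
    _ = v / M := by rw [intervalIntegral.integral_const, smul_eq_mul]; ring

theorem not_bddAbove_travelTime (hg : Continuous g) (hpos : ∀ r < B, 0 < g r) (hB : 0 < B)
    (hni : ¬ IntervalIntegrable (fun r => (g r)⁻¹) volume 0 B) :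
    ¬ BddAbove (travelTime g '' Ico 0 B) := by
  rintro ⟨M, hM⟩
  apply hni
  rw [intervalIntegrable_iff_integrableOn_Ioc_of_le hB.le]
  obtain ⟨u, -, hu, hlim⟩ := exists_seq_strictMono_tendsto' hB
  have hcont (n : ℕ) : ContinuousOn (fun r => (g r)⁻¹) (Icc 0 (u n)) :=
    hg.continuousOn.inv₀ fun r hr => (hpos r (hr.2.trans_lt (hu n).2)).ne'
  refine integrableOn_Ioc_of_intervalIntegral_norm_bounded_right (I := M)
    (fun n => (hcont n).integrableOn_Icc.mono_set Ioc_subset_Icc_self) hlim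
    (Eventually.of_forall fun n => ?_)
  rw [setIntegral_congr_fun measurableSet_Ioc fun r hr =>
      Real.norm_of_nonneg (inv_nonneg.2 (hpos r (hr.2.trans_lt (hu n).2)).le),
    ← intervalIntegral.integral_of_le (hu n).1.le]
  exact hM ⟨u n, ⟨(hu n).1.le, (hu n).2⟩, rfl⟩

theorem surjOn_travelTime (hg : Continuous g) (hpos : ∀ r < B, 0 < g r) (hB : 0 < B) {M : ℝ}
    (hM : ∀ r ≤ 0, g r ≤ M) (hni : ¬ IntervalIntegrable (fun r => (g r)⁻¹) volume 0 B) :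
    SurjOn (travelTime g) (Iio B) univ := by
  intro x _
  obtain ⟨_, ⟨w, hw, rfl⟩, hxw⟩ := not_bddAbove_iff.1 (not_bddAbove_travelTime hg hpos hB hni) x
  have hM0 : 0 < M := (hpos 0 hB).trans_le (hM 0 le_rfl)
  set v := min 0 (M * x)
  have hv : travelTime g v ≤ x := calc
    travelTime g v ≤ v / M :=
      travelTime_le_div_of_nonpos hg (fun r hr => hpos r (hr.trans_lt hB)) hM (min_le_left _ _)
    _ ≤ M * x / M := by gcongr; exact min_le_right _ _
    _ = x := by field_simp
  obtain ⟨c, hc, rfl⟩ := intermediate_value_Icc ((min_le_left _ _).trans hw.1)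
    (fun r hr =>
      (hasDerivAt_travelTime hg hpos hB (hr.2.trans_lt hw.2)).continuousAt.continuousWithinAt)
    ⟨hv, hxw.le⟩
  exact ⟨c, hc.2.trans_lt hw.2, rfl⟩

theorem travelTime_comp_eq (hg : Continuous g) (hpos : ∀ r < B, 0 < g r) (hB : 0 < B)
    {W : ℝ → ℝ} {t : ℝ} (hW0 : W 0 = 0) (hWB : ∀ y ∈ Icc 0 t, W y < B)
    (hW : ∀ y ∈ Icc 0 t, HasDerivAt W (g (W y)) y) : ∀ y ∈ Icc 0 t, travelTime g (W y) = y := by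
  have hD : ∀ y ∈ Icc 0 t, HasDerivAt (fun z => travelTime g (W z) - z) 0 y := fun y hy => by
    have := ((hasDerivAt_travelTime hg hpos hB (hWB y hy)).comp y (hW y hy)).sub (hasDerivAt_id y)
    rwa [inv_mul_cancel₀ (hpos _ (hWB y hy)).ne', sub_self] at this
  intro y hy
  have := constant_of_has_deriv_right_zero
    (fun z hz => (hD z hz).continuousAt.continuousWithinAt)
    (fun z hz => (hD z (Ico_subset_Icc_self hz)).hasDerivWithinAt) y hy
  exact sub_eq_zero.1 (by simpa [hW0, travelTime_zero] using this)

end TravelTime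

theorem not_intervalIntegrable_inv_of_le_mul_sub {g : ℝ → ℝ} {a b C : ℝ} (hab : a < b)
    (hg : ∀ r ∈ Ioo a b, 0 < g r ∧ g r ≤ C * (b - r)) :
    ¬ IntervalIntegrable (fun r => (g r)⁻¹) volume a b := by
  intro hint
  have hsub : IntervalIntegrable (fun r => (r - b)⁻¹) volume a b := by
    refine (hint.const_mul C).mono_fun' (by fun_prop) ?_
    rw [uIoc_of_le hab.le, ← Measure.restrict_congr_set Ioo_ae_eq_Ioc]
    filter_upwards [ae_restrict_mem measurableSet_Ioo] with r hr
    obtain ⟨hgr, hle⟩ := hg r hr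
    have hbr : 0 < b - r := sub_pos.2 hr.2
    rw [norm_inv, Real.norm_eq_abs, abs_sub_comm, abs_of_pos hbr, ← div_eq_mul_inv,
      le_div_iff₀ hgr, inv_mul_le_iff₀ hbr, mul_comm]
    exact hle
  exact (intervalIntegrable_sub_inv_iff.1 hsub).elim hab.ne fun h => h right_mem_uIcc

def leftExtend (f : ℝ → ℝ) (s : ℝ) : ℝ := f (max s 0)

def speed (f : ℝ → ℝ) (α r : ℝ) : ℝ := Real.sqrt (α ^ 2 - 2 * Fint (leftExtend f) r)

def turningPoints (f : ℝ → ℝ) (α : ℝ) : Set ℝ := {v | 0 < v ∧ α ^ 2 = 2 * Fint f v}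

def IsStationarySolution (f : ℝ → ℝ) (α : ℝ) (W : ℝ → ℝ) : Prop :=
  W 0 = 0 ∧ deriv W 0 = α ∧
    ∀ x ∈ Ici (0:ℝ), HasDerivAt W (deriv W x) x ∧ HasDerivAt (deriv W) (-(f (W x))) x

def stationarySolution (f : ℝ → ℝ) (α B : ℝ) : ℝ → ℝ := invFunOn (travelTime (speed f α)) (Iio B)

section Stationary

variable {f : ℝ → ℝ} {α B : ℝ} {W : ℝ → ℝ}

theorem leftExtend_of_nonneg {s : ℝ} (hs : 0 ≤ s) : leftExtend f s = f s := by
  rw [leftExtend, max_eq_left hs]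

theorem continuous_leftExtend (hf : ContinuousOn f (Ici 0)) : Continuous (leftExtend f) :=
  hf.comp_continuous (continuous_id.max continuous_const) fun s => le_max_right s 0

theorem hasDerivAt_Fint_leftExtend (hf : ContinuousOn f (Ici 0)) (v : ℝ) :
    HasDerivAt (Fint (leftExtend f)) (leftExtend f v) v :=
  (continuous_leftExtend hf).integral_hasStrictDerivAt 0 v |>.hasDerivAt

theorem continuous_Fint_leftExtend (hf : ContinuousOn f (Ici 0)) :
    Continuous (Fint (leftExtend f)) :=
  continuous_iff_continuousAt.2 fun v => (hasDerivAt_Fint_leftExtend hf v).continuousAt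

theorem Fint_leftExtend_of_nonneg {v : ℝ} (hv : 0 ≤ v) : Fint (leftExtend f) v = Fint f v :=
  intervalIntegral.integral_congr fun _ hs => leftExtend_of_nonneg (uIcc_of_le hv ▸ hs).1

theorem Fint_leftExtend_of_nonpos (hf0 : f 0 = 0) {v : ℝ} (hv : v ≤ 0) :
    Fint (leftExtend f) v = 0 := by
  rw [Fint, intervalIntegral.integral_congr (g := fun _ => 0) fun s hs => ?_,
    intervalIntegral.integral_zero]
  rw [leftExtend, max_eq_right (uIcc_of_ge hv ▸ hs).2, hf0]

theorem speed_of_nonneg {r : ℝ} (hr : 0 ≤ r) :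
    speed f α r = Real.sqrt (α ^ 2 - 2 * Fint f r) := by
  rw [speed, Fint_leftExtend_of_nonneg hr]

theorem speed_of_nonpos (hα : 0 ≤ α) (hf0 : f 0 = 0) {r : ℝ} (hr : r ≤ 0) : speed f α r = α := by
  rw [speed, Fint_leftExtend_of_nonpos hf0 hr, mul_zero, sub_zero, Real.sqrt_sq hα]

theorem continuous_speed (hf : ContinuousOn f (Ici 0)) : Continuous (speed f α) :=
  (continuous_const.sub (continuous_const.mul (continuous_Fint_leftExtend hf))).sqrt

theorem hasDerivAt_speed (hf : ContinuousOn f (Ici 0)) {r : ℝ} (hr : 0 < speed f α r) :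
    HasDerivAt (speed f α) (-(leftExtend f r) / speed f α r) r := by
  have h : HasDerivAt (speed f α) _ r :=
    (((hasDerivAt_Fint_leftExtend hf r).const_mul 2).const_sub (α ^ 2)).sqrt
      (Real.sqrt_pos.1 hr).ne'
  rwa [← mul_neg, ← speed, mul_div_mul_left _ _ two_ne_zero] at h

theorem speed_pos (hα : 0 < α) (hf : ContinuousOn f (Ici 0)) (hf0 : f 0 = 0)
    (hB : B ∈ lowerBounds (turningPoints f α)) {r : ℝ} (hr : r < B) : 0 < speed f α r := by
  refine Real.sqrt_pos.2 (sub_pos.2 ?_)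
  rcases le_or_gt r 0 with hr0 | hr0
  · simpa [Fint_leftExtend_of_nonpos hf0 hr0] using pow_pos hα 2
  by_contra! hle
  obtain ⟨c, hc, hcα⟩ : α ^ 2 / 2 ∈ Fint (leftExtend f) '' Icc 0 r :=
    intermediate_value_Icc hr0.le
      (continuous_Fint_leftExtend hf).continuousOn
      ⟨by rw [Fint_leftExtend_of_nonpos hf0 le_rfl]; positivity, by linarith⟩
  have hc0 : 0 < c := hc.1.lt_of_ne <| by
    rintro rfl
    rw [Fint_leftExtend_of_nonpos hf0 le_rfl] at hcα
    exact (pow_pos hα 2).ne' (by linarith)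
  have := hB ⟨hc0, by rw [← Fint_leftExtend_of_nonneg hc0.le, hcα]; ring⟩
  linarith [hc.2]

theorem isMaxOn_Fint_leftExtend (hf0 : f 0 = 0) (hB : B ∈ turningPoints f α)
    (hmax : ∀ v, 0 ≤ v → 2 * Fint f v ≤ α ^ 2) : IsMaxOn (Fint (leftExtend f)) univ B := by
  refine isMaxOn_univ_iff.2 fun v => ?_
  rw [Fint_leftExtend_of_nonneg hB.1.le]
  rcases le_total 0 v with hv | hv
  · rw [Fint_leftExtend_of_nonneg hv]; linarith [hmax v hv, hB.2]
  · rw [Fint_leftExtend_of_nonpos hf0 hv]; nlinarith [hB.2]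

theorem exists_speed_le_mul_sub (hf : ContDiffOn ℝ 1 f (Ici 0)) (hf0 : f 0 = 0)
    (hB : B ∈ turningPoints f α) (hmax : ∀ v, 0 ≤ v → 2 * Fint f v ≤ α ^ 2) :
    ∃ c < B, 0 ≤ c ∧ ∃ C, ∀ r ∈ Ioo c B, speed f α r ≤ C * (B - r) := by
  have hFmax := isMaxOn_Fint_leftExtend hf0 hB hmax
  have hfB : f B = 0 := by
    have := (hFmax.isLocalMax univ_mem).hasDerivAt_eq_zero
      (hasDerivAt_Fint_leftExtend hf.continuousOn B)
    rwa [leftExtend_of_nonneg hB.1.le] at this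
  obtain ⟨K, t, ht, hlip⟩ := (hf.contDiffAt (Ici_mem_nhds hB.1)).exists_lipschitzOnWith
  obtain ⟨l, u, ⟨hlB, hBu⟩, hsub⟩ := mem_nhds_iff_exists_Ioo_subset.1 ht
  refine ⟨max l 0, max_lt hlB hB.1, le_max_right _ _, Real.sqrt (2 * K), fun r hr => ?_⟩
  have hr' : l < r ∧ 0 < r := max_lt_iff.1 hr.1
  have hbound : ∀ s ∈ Ico r B, ‖leftExtend f s‖ ≤ K * (B - r) := by
    intro s hs
    rw [leftExtend_of_nonneg (hr'.2.le.trans hs.1), ← sub_zero (f s), ← hfB, ← dist_eq_norm]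
    calc dist (f s) (f B) ≤ K * dist s B :=
          hlip.dist_le_mul s (hsub ⟨hr'.1.trans_le hs.1, hs.2.trans hBu⟩) B (hsub ⟨hlB, hBu⟩)
      _ ≤ K * (B - r) := by
          rw [Real.dist_eq, abs_of_neg (sub_neg.2 hs.2)]
          gcongr
          linarith [hs.1]
  have hmvt := norm_image_sub_le_of_norm_deriv_le_segment'
    (fun s _ => (hasDerivAt_Fint_leftExtend hf.continuousOn s).hasDerivWithinAt) hbound B
    ⟨hr.2.le, le_rfl⟩
  rw [Real.norm_eq_abs, abs_of_nonneg (sub_nonneg.2 (hFmax (mem_univ r)))] at hmvt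
  calc speed f α r = Real.sqrt (2 * (Fint (leftExtend f) B - Fint (leftExtend f) r)) := by
        rw [speed, Fint_leftExtend_of_nonneg hB.1.le, hB.2]; ring_nf
    _ ≤ Real.sqrt (2 * K * (B - r) ^ 2) := Real.sqrt_le_sqrt (by nlinarith)
    _ = Real.sqrt (2 * K) * (B - r) := by
        rw [Real.sqrt_mul (by positivity), Real.sqrt_sq (sub_nonneg.2 hr.2.le)]

theorem not_intervalIntegrable_inv_speed (hf : ContDiffOn ℝ 1 f (Ici 0)) (hf0 : f 0 = 0)
    (hB : B ∈ turningPoints f α) (hpos : ∀ r < B, 0 < speed f α r)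
    (hmax : ∀ v, 0 ≤ v → 2 * Fint f v ≤ α ^ 2) :
    ¬ IntervalIntegrable (fun r => (speed f α r)⁻¹) volume 0 B := by
  obtain ⟨c, hcB, hc0, C, hC⟩ := exists_speed_le_mul_sub hf hf0 hB hmax
  refine fun h => not_intervalIntegrable_inv_of_le_mul_sub hcB
    (fun r hr => ⟨hpos r hr.2, hC r hr⟩) (h.mono_set (uIcc_subset_uIcc ?_ right_mem_uIcc))
  rw [uIcc_of_le hB.1.le]
  exact ⟨hc0, hcB.le⟩

theorem hasDerivAt_stationarySolution (hf : ContinuousOn f (Ici 0)) (hB0 : 0 < B)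
    (hpos : ∀ r < B, 0 < speed f α r) (hmono : StrictMonoOn (travelTime (speed f α)) (Iio B))
    (hsurj : SurjOn (travelTime (speed f α)) (Iio B) univ) (x : ℝ) :
    HasDerivAt (stationarySolution f α B) (speed f α (stationarySolution f α B x)) x := by
  have hlt := invFunOn_Iio_lt hsurj x
  have h := hasDerivAt_invFunOn_Iio hmono hsurj
    (hasDerivAt_travelTime (continuous_speed hf) hpos hB0 hlt) (inv_ne_zero (hpos _ hlt).ne')
  rwa [inv_inv] at h

theorem stationarySolution_zero (hB0 : 0 < B)
    (hmono : StrictMonoOn (travelTime (speed f α)) (Iio B)) : stationarySolution f α B 0 = 0 := by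
  have h := invFunOn_Iio_apply hmono hB0
  rwa [travelTime_zero] at h

theorem stationarySolution_nonneg (hB0 : 0 < B)
    (hmono : StrictMonoOn (travelTime (speed f α)) (Iio B))
    (hsurj : SurjOn (travelTime (speed f α)) (Iio B) univ) {x : ℝ} (hx : 0 ≤ x) :
    0 ≤ stationarySolution f α B x :=
  stationarySolution_zero hB0 hmono ▸ (strictMono_invFunOn_Iio hmono hsurj).monotone hx

theorem isStationarySolution_stationarySolution (hα : 0 < α) (hf : ContinuousOn f (Ici 0))
    (hf0 : f 0 = 0) (hB0 : 0 < B) (hpos : ∀ r < B, 0 < speed f α r)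
    (hmono : StrictMonoOn (travelTime (speed f α)) (Iio B))
    (hsurj : SurjOn (travelTime (speed f α)) (Iio B) univ) :
    IsStationarySolution f α (stationarySolution f α B) := by
  have hV := hasDerivAt_stationarySolution hf hB0 hpos hmono hsurj
  have hV' : deriv (stationarySolution f α B) = speed f α ∘ stationarySolution f α B :=
    funext fun x => (hV x).deriv
  refine ⟨stationarySolution_zero hB0 hmono, ?_, fun x hx => ⟨hV' ▸ hV x, ?_⟩⟩
  · rw [hV', comp_apply, stationarySolution_zero hB0 hmono, speed_of_nonpos hα.le hf0 le_rfl]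
  · have hVx : 0 < speed f α (stationarySolution f α B x) := hpos _ (invFunOn_Iio_lt hsurj x)
    have h := (hasDerivAt_speed hf hVx).comp x (hV x)
    rw [div_mul_cancel₀ _ hVx.ne',
      leftExtend_of_nonneg (stationarySolution_nonneg hB0 hmono hsurj hx)] at h
    rwa [hV']

theorem IsStationarySolution.energy (hf : ContinuousOn f (Ici 0))
    (hW : IsStationarySolution f α W) {t : ℝ} (hWnn : ∀ y ∈ Icc 0 t, 0 ≤ W y) :
    ∀ y ∈ Icc 0 t, deriv W y ^ 2 = α ^ 2 - 2 * Fint (leftExtend f) (W y) := by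
  obtain ⟨hW0, hW'0, hode⟩ := hW
  have hE : ∀ y ∈ Icc 0 t,
      HasDerivAt (fun z => deriv W z ^ 2 + 2 * Fint (leftExtend f) (W z)) 0 y := by
    intro y hy
    have h := ((hode y hy.1).2.pow 2).add
      (((hasDerivAt_Fint_leftExtend hf (W y)).comp y (hode y hy.1).1).const_mul 2)
    refine h.congr_deriv ?_
    rw [leftExtend_of_nonneg (hWnn y hy)]
    push_cast
    ring
  intro y hy
  have := constant_of_has_deriv_right_zero
    (fun z hz => (hE z hz).continuousAt.continuousWithinAt)
    (fun z hz => (hE z (Ico_subset_Icc_self hz)).hasDerivWithinAt) y hy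
  have hF0 : Fint (leftExtend f) 0 = 0 := intervalIntegral.integral_same
  simp only [hW0, hW'0, hF0] at this
  linarith

theorem IsStationarySolution.eqOn_of_deriv_pos (hf : ContinuousOn f (Ici 0))
    (hB : B ∈ turningPoints f α) (hpos : ∀ r < B, 0 < speed f α r)
    (hmono : StrictMonoOn (travelTime (speed f α)) (Iio B))
    (hW : IsStationarySolution f α W) {t : ℝ} (hderiv : ∀ y ∈ Icc 0 t, 0 < deriv W y) :
    EqOn W (stationarySolution f α B) (Icc 0 t) := by
  have hWd : ∀ y ∈ Icc 0 t, HasDerivAt W (deriv W y) y := fun y hy => (hW.2.2 y hy.1).1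
  have hWmono : StrictMonoOn W (Icc 0 t) :=
    strictMonoOn_of_deriv_pos (convex_Icc 0 t)
      (fun y hy => (hWd y hy).continuousAt.continuousWithinAt)
      fun y hy => hderiv y (interior_subset hy)
  have hWnn : ∀ y ∈ Icc 0 t, 0 ≤ W y := fun y hy =>
    hW.1 ▸ hWmono.monotoneOn (left_mem_Icc.2 (hy.1.trans hy.2)) hy hy.1
  have henergy := hW.energy hf hWnn
  have hWB : ∀ y ∈ Icc 0 t, W y < B := by
    intro y hy
    by_contra! hBy
    obtain ⟨z, hz, hzB⟩ : B ∈ W '' Icc 0 y :=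
      intermediate_value_Icc hy.1
        (fun z hz => (hWd z ⟨hz.1, hz.2.trans hy.2⟩).continuousAt.continuousWithinAt)
        ⟨by rw [hW.1]; exact hB.1.le, hBy⟩
    have hz' : z ∈ Icc 0 t := ⟨hz.1, hz.2.trans hy.2⟩
    have h := henergy z hz'
    rw [hzB, Fint_leftExtend_of_nonneg hB.1.le, ← hB.2, sub_self] at h
    exact (hderiv z hz').ne' (pow_eq_zero_iff two_ne_zero |>.1 h)
  have hspeed : ∀ y ∈ Icc 0 t, HasDerivAt W (speed f α (W y)) y := by
    intro y hy
    rw [speed, ← henergy y hy, Real.sqrt_sq (hderiv y hy).le]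
    exact hWd y hy
  intro y hy
  exact (invFunOn_Iio_apply hmono (hWB y hy)).symm.trans
    (congrArg _ (travelTime_comp_eq (continuous_speed hf) hpos hB.1 hW.1 hWB hspeed y hy))

theorem IsStationarySolution.eqOn_of_deriv_pos_Ico (hf : ContinuousOn f (Ici 0))
    (hB : B ∈ turningPoints f α) (hpos : ∀ r < B, 0 < speed f α r)
    (hmono : StrictMonoOn (travelTime (speed f α)) (Iio B))
    (hsurj : SurjOn (travelTime (speed f α)) (Iio B) univ)
    (hW : IsStationarySolution f α W) {t : ℝ} (ht : 0 < t)
    (hderiv : ∀ y ∈ Ico 0 t, 0 < deriv W y) :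
    EqOn W (stationarySolution f α B) (Icc 0 t) := by
  have hIco : EqOn W (stationarySolution f α B) (Ico 0 t) := fun y hy =>
    hW.eqOn_of_deriv_pos hf hB hpos hmono (fun z hz => hderiv z ⟨hz.1, hz.2.trans_lt hy.2⟩)
      ⟨hy.1, le_rfl⟩
  exact hIco.of_subset_closure (fun y hy => (hW.2.2 y hy.1).1.continuousAt.continuousWithinAt)
    (continuous_invFunOn_Iio hmono hsurj).continuousOn Ico_subset_Icc_self (closure_Ico ht.ne).ge

theorem IsStationarySolution.deriv_pos (hα : 0 < α) (hf : ContinuousOn f (Ici 0))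
    (hB : B ∈ turningPoints f α) (hpos : ∀ r < B, 0 < speed f α r)
    (hmono : StrictMonoOn (travelTime (speed f α)) (Iio B))
    (hsurj : SurjOn (travelTime (speed f α)) (Iio B) univ)
    (hW : IsStationarySolution f α W) : ∀ x ∈ Ici 0, 0 < deriv W x := by
  by_contra! ⟨x, hx, hWx⟩
  set Z := Ici (0:ℝ) ∩ deriv W ⁻¹' Iic 0
  have hZ : BddBelow Z := ⟨0, fun _ hz => hz.1⟩
  have hcont : ContinuousOn (deriv W) (Ici 0) :=
    fun y hy => (hW.2.2 y hy).2.continuousAt.continuousWithinAt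
  have hT : sInf Z ∈ Z :=
    (hcont.preimage_isClosed_of_isClosed isClosed_Ici isClosed_Iic).csInf_mem ⟨x, hx, hWx⟩ hZ
  set T := sInf Z
  obtain ⟨z, hz, hz0⟩ : (0:ℝ) ∈ deriv W '' Icc 0 T :=
    intermediate_value_Icc' hT.1 (hcont.mono Icc_subset_Ici_self) ⟨hT.2, hW.2.1 ▸ hα.le⟩
  have hWT : deriv W T = 0 := le_antisymm hz.2 (csInf_le hZ ⟨hz.1, hz0.le⟩) ▸ hz0
  have hT0 : 0 < T := hT.1.lt_of_ne fun h => hα.ne' (hW.2.1 ▸ h ▸ hWT)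
  have hEq := hW.eqOn_of_deriv_pos_Ico hf hB hpos hmono hsurj hT0 fun y hy =>
    not_le.1 fun h => (csInf_le hZ ⟨hy.1, h⟩).not_gt hy.2
  have henergy := hW.energy hf
    (fun y hy => hEq hy ▸ stationarySolution_nonneg hB.1 hmono hsurj hy.1) T ⟨hT0.le, le_rfl⟩
  have hspeed : 0 < speed f α (stationarySolution f α B T) := hpos _ (invFunOn_Iio_lt hsurj T)
  rw [hWT, hEq ⟨hT0.le, le_rfl⟩] at henergy
  rw [speed, ← henergy] at hspeed
  simp at hspeed

end Stationary

theorem statement12_general (f : ℝ → ℝ) (α : ℝ) (hα : 0 < α)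
    (hf : ContDiffOn ℝ 1 f (Ici 0)) (hf0 : f 0 = 0)
    (B : ℝ)
    (hcase :
      ((∃ v : ℝ, 0 < v ∧ α ^ 2 < 2 * Fint f v) ∧
        IsLeast {v : ℝ | 0 < v ∧ α ^ 2 = 2 * Fint f v} B ∧
        ¬ IntervalIntegrable (fun r => (Real.sqrt (α ^ 2 - 2 * Fint f r))⁻¹)
            MeasureTheory.volume 0 B) ∨
      ((∀ v : ℝ, 0 ≤ v → 2 * Fint f v ≤ α ^ 2) ∧
        IsLeast {v : ℝ | 0 < v ∧ α ^ 2 = 2 * Fint f v} B)) :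
    ∃ V : ℝ → ℝ,
      (V 0 = 0 ∧ deriv V 0 = α ∧
        ∀ x ∈ Ici (0:ℝ), HasDerivAt V (deriv V x) x ∧
          HasDerivAt (deriv V) (-(f (V x))) x) ∧
      (∀ W : ℝ → ℝ,
        (W 0 = 0 ∧ deriv W 0 = α ∧
          ∀ x ∈ Ici (0:ℝ), HasDerivAt W (deriv W x) x ∧
            HasDerivAt (deriv W) (-(f (W x))) x) →
        ∀ x ∈ Ici (0:ℝ), W x = V x) ∧
      (∀ x ∈ Ici (0:ℝ), 0 < deriv V x) ∧
      Tendsto V atTop (𝓝 B) := by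
  have hB : IsLeast (turningPoints f α) B := by
    rcases hcase with ⟨-, hB, -⟩ | ⟨-, hB⟩ <;> exact hB
  have hB0 : 0 < B := hB.1.1
  have hfc := hf.continuousOn
  have hpos : ∀ r < B, 0 < speed f α r := fun r => speed_pos hα hfc hf0 hB.2
  have hni : ¬ IntervalIntegrable (fun r => (speed f α r)⁻¹) volume 0 B := by
    rcases hcase with ⟨-, -, hni⟩ | ⟨hmax, -⟩
    · refine fun h => hni (h.congr fun r hr => ?_)
      rw [uIoc_of_le hB0.le] at hr
      rw [speed_of_nonneg hr.1.le]
    · exact not_intervalIntegrable_inv_speed hf hf0 hB.1 hpos hmax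
  have hmono := strictMonoOn_travelTime (continuous_speed hfc) hpos hB0
  have hsurj := surjOn_travelTime (continuous_speed hfc) hpos hB0
    (fun r hr => (speed_of_nonpos hα.le hf0 hr).le) hni
  have hV := isStationarySolution_stationarySolution hα hfc hf0 hB0 hpos hmono hsurj
  refine ⟨stationarySolution f α B, hV,
    fun W (hW : IsStationarySolution f α W) x hx => hW.eqOn_of_deriv_pos hfc hB.1 hpos hmono
      (fun y hy => hW.deriv_pos hα hfc hB.1 hpos hmono hsurj y hy.1) ⟨hx, le_rfl⟩,
    fun x _ => ?_, tendsto_invFunOn_Iio_atTop hmono hsurj⟩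
  rw [(hasDerivAt_stationarySolution hfc hB0 hpos hmono hsurj x).deriv]
  exact hpos _ (invFunOn_Iio_lt hsurj x)

/-- Lemma 2.7 (ii): in the case `α < α₀` with `ℓ = ∞` (expressed by
non-integrability of `(√(α² - 2F(r)))⁻¹` on `(0,B)`), or `α = α₀` with the supremum of `F`
attained (expressed by `2F(v) ≤ α²` for all `v ≥ 0` together with the existence of a
minimal `v̄ > 0` with `2F(v̄) = α²`), the stationary problem `v'' + f(v) = 0`, `v(0) = 0`,
`v'(0) = α` has a unique solution `Ṽ_α`, defined on all of `[0, ∞)`, strictly increasing,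
with `Ṽ_α(x) → B` as `x → ∞`. -/
theorem statement12 (f : ℝ → ℝ) (α : ℝ) (hα : 0 < α)
    (hf : ContDiffOn ℝ 1 f (Ici 0)) (hf0 : f 0 = 0)
    (hsup : ∃ v : ℝ, 0 < v ∧ 0 < Fint f v)
    (B : ℝ)
    (hcase :
      ((∃ v : ℝ, 0 < v ∧ α ^ 2 < 2 * Fint f v) ∧
        IsLeast {v : ℝ | 0 < v ∧ α ^ 2 = 2 * Fint f v} B ∧
        ¬ IntervalIntegrable (fun r => (Real.sqrt (α ^ 2 - 2 * Fint f r))⁻¹)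
            MeasureTheory.volume 0 B) ∨
      ((∀ v : ℝ, 0 ≤ v → 2 * Fint f v ≤ α ^ 2) ∧
        IsLeast {v : ℝ | 0 < v ∧ α ^ 2 = 2 * Fint f v} B)) :
    ∃ V : ℝ → ℝ,
      (V 0 = 0 ∧ deriv V 0 = α ∧
        ∀ x ∈ Ici (0:ℝ), HasDerivAt V (deriv V x) x ∧
          HasDerivAt (deriv V) (-(f (V x))) x) ∧
      (∀ W : ℝ → ℝ,
        (W 0 = 0 ∧ deriv W 0 = α ∧
          ∀ x ∈ Ici (0:ℝ), HasDerivAt W (deriv W x) x ∧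
            HasDerivAt (deriv W) (-(f (W x))) x) →
        ∀ x ∈ Ici (0:ℝ), W x = V x) ∧
      (∀ x ∈ Ici (0:ℝ), 0 < deriv V x) ∧
      Tendsto V atTop (𝓝 B) :=
  statement12_general f α hα hf hf0 B hcase
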